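/- Conditional entropy lower bound via maximum posterior: For a discrete random variable L on a finite set 𝓛 and a random variable Z with joint distribution, H(L | Z) ≥ −log₂ E_Z[max_{l ∈ 𝓛} P(L = l | Z)]. Consequently, with p_e* = 1 − E_Z[max_l P(L = l | Z)] the Bayes error, I(L; Z) ≤ H(L) + log₂(1 − p_e*). -/

import Mathlib

open MeasureTheory Real

/-- Binary entropy function in bits (with the convention `0 * logb 2 0 = 0`,
which holds in Lean since `Real.log 0 = 0`). -/
noncomputable def binEnt (p : ℝ) : ℝ :=
  -p * Real.logb 2 p - (1 - p) * Real.logb 2 (1 - p)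

/-- Shannon entropy (in bits) of a random variable `L` with values in a finite set. -/
noncomputable def prEnt {Ω 𝓛 : Type*} [MeasurableSpace Ω] [Fintype 𝓛]
    (μ : Measure Ω) (L : Ω → 𝓛) : ℝ :=
  ∑ l : 𝓛, -(μ (L ⁻¹' {l})).toReal * Real.logb 2 (μ (L ⁻¹' {l})).toReal

/-- Conditional Shannon entropy (in bits) `H(L | Z)` for finite-valued `L` and `Z`. -/
noncomputable def prCondEnt {Ω 𝓛 β : Type*} [MeasurableSpace Ω] [Fintype 𝓛] [Fintype β]
    (μ : Measure Ω) (L : Ω → 𝓛) (Z : Ω → β) : ℝ :=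
  ∑ z : β, ∑ l : 𝓛,
    -(μ (L ⁻¹' {l} ∩ Z ⁻¹' {z})).toReal *
      Real.logb 2 ((μ (L ⁻¹' {l} ∩ Z ⁻¹' {z})).toReal / (μ (Z ⁻¹' {z})).toReal)

/-- Mutual information (in bits): `I(L; Z) = H(L) - H(L | Z)`. -/
noncomputable def prMutInfo {Ω 𝓛 β : Type*} [MeasurableSpace Ω] [Fintype 𝓛] [Fintype β]
    (μ : Measure Ω) (L : Ω → 𝓛) (Z : Ω → β) : ℝ :=
  prEnt μ L - prCondEnt μ L Z

/-- Bayes (minimum) error probability for classifying `L` from `Z`. -/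
noncomputable def bayesErr {Ω 𝓛 β : Type*} [MeasurableSpace Ω] [Fintype 𝓛] [Fintype β]
    (μ : Measure Ω) (L : Ω → 𝓛) (Z : Ω → β) : ℝ :=
  ⨅ f : β → 𝓛, (μ {ω | L ω ≠ f (Z ω)}).toReal

/-! Bounding each posterior `P(L = l | Z = z)` inside the logarithm by its maximum gives
`H(L | Z = z) ≥ -log₂ max_l P(L = l | Z = z)` for every `z`. Averaging over `z` and applying
Jensen's inequality to the concave `log₂` turns the average of logarithms into the logarithm of
`E_Z[max_l P(L = l | Z)]`; the bound on `I(L; Z) = H(L) - H(L | Z)` is the same inequality. -/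

open Finset

theorem concaveOn_logb_Ioi {b : ℝ} (hb : 1 < b) : ConcaveOn ℝ (Set.Ioi 0) (logb b) := by
  have hlog : ConcaveOn ℝ (Set.Ioi 0) fun x => (log b)⁻¹ • log x :=
    strictConcaveOn_log_Ioi.concaveOn.smul (inv_nonneg.2 (log_nonneg hb.le))
  convert hlog using 1
  funext x
  rw [smul_eq_mul, inv_mul_eq_div, logb]

theorem sum_mul_logb_div_le_logb_sum {ι : Type*} {s : Finset ι} {b : ℝ} (hb : 1 < b)
    {w x : ι → ℝ} (hw : ∀ i ∈ s, 0 ≤ w i) (hw₁ : ∑ i ∈ s, w i = 1) (hx : ∀ i ∈ s, 0 ≤ x i)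
    (hwx : ∀ i ∈ s, 0 < w i → 0 < x i) :
    ∑ i ∈ s, w i * logb b (x i / w i) ≤ logb b (∑ i ∈ s, x i) := by
  classical
  -- Jensen is applied on the support of `w`, where the points `x i / w i` are positive.
  set t := s.filter fun i => 0 < w i
  have hts : t ⊆ s := filter_subset _ _
  have hwt : ∀ i ∈ s, i ∉ t → w i = 0 := fun i hi hit =>
    le_antisymm (not_lt.1 fun h => hit (mem_filter.2 ⟨hi, h⟩)) (hw i hi)
  have hpos : ∀ i ∈ t, 0 < w i := fun i hi => (mem_filter.1 hi).2
  have ht₁ : ∑ i ∈ t, w i = 1 := by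
    rw [← hw₁]
    exact sum_subset hts hwt
  have hxt : 0 < ∑ i ∈ t, x i := by
    obtain ⟨i, hi⟩ := nonempty_of_sum_ne_zero (ht₁.trans_ne one_ne_zero)
    exact sum_pos' (fun j hj => hx j (hts hj)) ⟨i, hi, hwx i (hts hi) (hpos i hi)⟩
  calc ∑ i ∈ s, w i * logb b (x i / w i)
      = ∑ i ∈ t, w i • logb b (x i / w i) :=
        (sum_subset hts fun i hi hit => by simp [hwt i hi hit]).symm
    _ ≤ logb b (∑ i ∈ t, w i • (x i / w i)) :=
        (concaveOn_logb_Ioi hb).le_map_sum (fun i hi => (hpos i hi).le) ht₁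
          fun i hi => div_pos (hwx i (hts hi) (hpos i hi)) (hpos i hi)
    _ = logb b (∑ i ∈ t, x i) := by
        congr 1
        exact sum_congr rfl fun i hi => mul_div_cancel₀ _ (hpos i hi).ne'
    _ ≤ logb b (∑ i ∈ s, x i) :=
        logb_le_logb_of_le hb hxt (sum_le_sum_of_subset_of_nonneg hts fun i hi _ => hx i hi)

theorem sum_mul_logb_div_le_mul_logb_iSup_div {ι : Type*} [Fintype ι] {b q : ℝ} (hb : 1 < b)
    {p : ι → ℝ} (hp : ∀ i, 0 ≤ p i) (hq : ∑ i, p i = q) :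
    ∑ i, p i * logb b (p i / q) ≤ q * logb b ((⨆ i, p i) / q) := by
  rw [← hq, sum_mul, hq]
  refine sum_le_sum fun i _ => ?_
  rcases (hp i).eq_or_lt with h | h
  · simp [← h]
  have hqpos : 0 < q := hq ▸ h.trans_le (single_le_sum (fun j _ => hp j) (mem_univ i))
  have hle : p i ≤ ⨆ j, p j := le_ciSup (Set.finite_range p).bddAbove i
  exact mul_le_mul_of_nonneg_left
    (logb_le_logb_of_le hb (div_pos h hqpos) (div_le_div_of_nonneg_right hle hqpos.le)) h.le

/-- `p` is a joint distribution of `(L, Z)` and `q` the marginal of `Z`; the right-hand side is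
`H(L | Z)` in base `b`. -/
theorem neg_logb_sum_iSup_le_condEntropy {α β : Type*} [Fintype α] [Fintype β] {b : ℝ}
    (hb : 1 < b) {p : α → β → ℝ} {q : β → ℝ} (hp : ∀ a z, 0 ≤ p a z)
    (hq : ∀ z, ∑ a, p a z = q z) (hq₁ : ∑ z, q z = 1) :
    -logb b (∑ z, ⨆ a, p a z) ≤ ∑ z, ∑ a, -p a z * logb b (p a z / q z) := by
  have hq₀ : ∀ z, 0 ≤ q z := fun z => hq z ▸ sum_nonneg fun a _ => hp a z
  have hmax : ∀ z, 0 < q z → 0 < ⨆ a, p a z := by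
    intro z hz
    obtain ⟨a, -, ha⟩ := (sum_pos_iff_of_nonneg fun a _ => hp a z).1 (hq z ▸ hz)
    exact ha.trans_le (le_ciSup (Set.finite_range fun a => p a z).bddAbove a)
  have jensen := sum_mul_logb_div_le_logb_sum hb (fun z _ => hq₀ z) hq₁
    (fun z _ => Real.iSup_nonneg fun a => hp a z) fun z _ => hmax z
  calc -logb b (∑ z, ⨆ a, p a z)
      ≤ -∑ z, q z * logb b ((⨆ a, p a z) / q z) := neg_le_neg jensen
    _ ≤ -∑ z, ∑ a, p a z * logb b (p a z / q z) :=
        neg_le_neg (sum_le_sum fun z _ =>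
          sum_mul_logb_div_le_mul_logb_iSup_div hb (fun a => hp a z) (hq z))
    _ = ∑ z, ∑ a, -p a z * logb b (p a z / q z) := by simp only [neg_mul, sum_neg_distrib]

theorem sum_measure_preimage_singleton_inter {Ω 𝓛 : Type*} [MeasurableSpace Ω] [Fintype 𝓛]
    [MeasurableSpace 𝓛] [MeasurableSingletonClass 𝓛] (μ : Measure Ω) {L : Ω → 𝓛}
    (hL : Measurable L) (s : Set Ω) : ∑ l, μ (L ⁻¹' {l} ∩ s) = μ s := by
  have h := sum_measure_preimage_singleton (μ := μ.restrict s) univ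
    fun l _ => hL (measurableSet_singleton l)
  simpa [Measure.restrict_apply (hL (measurableSet_singleton _))] using h

-- `∑ z, ⨆ l, P(L = l, Z = z)` is `E_Z[max_l P(L = l | Z)]`.
theorem condEnt_ge_neg_log_expected_max_posterior_general {Ω 𝓛 β : Type*} [MeasurableSpace Ω]
    [Fintype 𝓛] [MeasurableSpace 𝓛] [MeasurableSingletonClass 𝓛]
    [Fintype β] [MeasurableSpace β] [MeasurableSingletonClass β]
    (μ : Measure Ω) [IsProbabilityMeasure μ]
    (L : Ω → 𝓛) (Z : Ω → β) (hL : Measurable L) (hZ : Measurable Z) :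
    -Real.logb 2 (∑ z : β, ⨆ l : 𝓛, (μ (L ⁻¹' {l} ∩ Z ⁻¹' {z})).toReal) ≤ prCondEnt μ L Z ∧
    prMutInfo μ L Z ≤ prEnt μ L +
      Real.logb 2 (1 - (1 - ∑ z : β, ⨆ l : 𝓛, (μ (L ⁻¹' {l} ∩ Z ⁻¹' {z})).toReal)) := by
  have hmarg : ∀ z, ∑ l, (μ (L ⁻¹' {l} ∩ Z ⁻¹' {z})).toReal = (μ (Z ⁻¹' {z})).toReal :=
    fun z => by
      rw [← ENNReal.toReal_sum fun l _ => measure_ne_top μ _,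
        sum_measure_preimage_singleton_inter μ hL]
  have htotal : ∑ z, (μ (Z ⁻¹' {z})).toReal = 1 := by
    rw [← ENNReal.toReal_sum fun z _ => measure_ne_top μ _]
    simpa using congrArg ENNReal.toReal (sum_measure_preimage_singleton_inter μ hZ Set.univ)
  have hcond : -logb 2 (∑ z, ⨆ l, (μ (L ⁻¹' {l} ∩ Z ⁻¹' {z})).toReal) ≤ prCondEnt μ L Z :=
    neg_logb_sum_iSup_le_condEntropy one_lt_two (fun l z => ENNReal.toReal_nonneg) hmarg htotal
  refine ⟨hcond, ?_⟩
  rw [prMutInfo, sub_sub_cancel]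
  linarith

/-- `H(L | Z) ≥ -log₂ E_Z[max_l P(L = l | Z)]` (note
`E_Z[max_l P(L = l | Z)] = ∑_z max_l P(L = l, Z = z)`); consequently, with
`p_e* = 1 - E_Z[max_l P(L = l | Z)]`, `I(L; Z) ≤ H(L) + log₂(1 - p_e*)`. -/
theorem condEnt_ge_neg_log_expected_max_posterior {Ω 𝓛 β : Type*} [MeasurableSpace Ω]
    [Fintype 𝓛] [Nonempty 𝓛] [MeasurableSpace 𝓛] [MeasurableSingletonClass 𝓛]
    [Fintype β] [MeasurableSpace β] [MeasurableSingletonClass β]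
    (μ : Measure Ω) [IsProbabilityMeasure μ]
    (L : Ω → 𝓛) (Z : Ω → β) (hL : Measurable L) (hZ : Measurable Z) :
    -Real.logb 2 (∑ z : β, ⨆ l : 𝓛, (μ (L ⁻¹' {l} ∩ Z ⁻¹' {z})).toReal) ≤ prCondEnt μ L Z ∧
    prMutInfo μ L Z ≤ prEnt μ L +
      Real.logb 2 (1 - (1 - ∑ z : β, ⨆ l : 𝓛, (μ (L ⁻¹' {l} ∩ Z ⁻¹' {z})).toReal)) :=
  condEnt_ge_neg_log_expected_max_posterior_general μ L Z hL hZ
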